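/- Let d ≥ 2 be an integer, b > 1 a real number, and λ ∈ S¹. Then 1 is a fixed point of f_λ (i.e. f_λ(1) = 1) if and only if λ = 1; moreover |f'_λ(1)| = d(b−1)/(b+1), so 1 is an attracting fixed point of f_λ (f_λ(1) = 1 and |f'_λ(1)| < 1) if and only if λ = 1 and b < (d+1)/(d−1). -/

import Mathlib

/-! The Möbius factor `(z+b)/(bz+1)` fixes `1` with derivative `(1-b)/(1+b)`, so `f_λ(1) = λ` and
`f_λ'(1) = λ d (1-b)/(1+b)`; on `S¹` the modulus of the latter is `d(b-1)/(b+1)`. -/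

open Complex

/-- The Ising recursion map `f_λ(z) = λ·((z+b)/(bz+1))^d`. -/
noncomputable def fIsing (d : ℕ) (b : ℝ) (lam z : ℂ) : ℂ :=
  lam * ((z + (b : ℂ)) / ((b : ℂ) * z + 1)) ^ d

lemma hasDerivAt_div_add_mul_add_one {b z : ℂ} (hz : b * z + 1 ≠ 0) :
    HasDerivAt (fun w : ℂ => (w + b) / (b * w + 1)) ((1 - b ^ 2) / (b * z + 1) ^ 2) z := by
  have hnum : HasDerivAt (fun w : ℂ => w + b) 1 z := (hasDerivAt_id' z).add_const b
  have hden : HasDerivAt (fun w : ℂ => b * w + 1) b z := by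
    simpa using ((hasDerivAt_id' z).const_mul b).add_const 1
  exact (hnum.div hden hz).congr_deriv (by ring)

lemma hasDerivAt_fIsing (d : ℕ) (b : ℝ) (lam : ℂ) {z : ℂ} (hz : (b : ℂ) * z + 1 ≠ 0) :
    HasDerivAt (fIsing d b lam)
      (lam * ((d : ℂ) * ((z + b) / (b * z + 1)) ^ (d - 1) * ((1 - (b : ℂ) ^ 2) / (b * z + 1) ^ 2)))
      z :=
  ((hasDerivAt_div_add_mul_add_one hz).pow d).const_mul lam

lemma ofReal_add_one_ne_zero {b : ℝ} (hb : b ≠ -1) : (b : ℂ) + 1 ≠ 0 := by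
  exact_mod_cast fun h => hb (eq_neg_of_add_eq_zero_left h)

lemma fIsing_one (d : ℕ) {b : ℝ} (hb : b ≠ -1) (lam : ℂ) : fIsing d b lam 1 = lam := by
  simp only [fIsing, mul_one, add_comm (1 : ℂ), div_self (ofReal_add_one_ne_zero hb), one_pow]

lemma deriv_fIsing_one (d : ℕ) {b : ℝ} (hb : b ≠ -1) (lam : ℂ) :
    deriv (fIsing d b lam) 1 = lam * (d * (((1 - b) / (b + 1) : ℝ) : ℂ)) := by
  have hden := ofReal_add_one_ne_zero hb
  rw [(hasDerivAt_fIsing d b lam (by rwa [mul_one])).deriv]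
  simp only [mul_one, add_comm (1 : ℂ), div_self hden, one_pow]
  push_cast
  field_simp
  ring

lemma norm_deriv_fIsing_one (d : ℕ) {b : ℝ} (hb : 1 < b) {lam : ℂ} (hlam : ‖lam‖ = 1) :
    ‖deriv (fIsing d b lam) 1‖ = d * (b - 1) / (b + 1) := by
  rw [deriv_fIsing_one d (by linarith) lam, norm_mul, hlam, one_mul, norm_mul, norm_natCast,
    norm_real, Real.norm_eq_abs, abs_div, abs_of_neg (by linarith), abs_of_pos (by linarith)]
  ring

lemma mul_sub_one_div_add_one_lt_one_iff {d b : ℝ} (hd : 1 < d) (hb : -1 < b) :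
    d * (b - 1) / (b + 1) < 1 ↔ b < (d + 1) / (d - 1) := by
  rw [div_lt_one (by linarith), lt_div_iff₀ (by linarith)]
  constructor <;> intro h <;> linarith

/-- Let `d ≥ 2`, `b > 1` and `λ ∈ S¹`.  Then `1` is a fixed point of `f_λ` iff `λ = 1`;
moreover `|f'_λ(1)| = d(b−1)/(b+1)`, so `1` is an attracting fixed point of `f_λ` iff
`λ = 1` and `b < (d+1)/(d−1)`. -/
theorem stmt12 (d : ℕ) (hd : 2 ≤ d) (b : ℝ) (hb : 1 < b)
    (lam : ℂ) (hlam : lam ∈ Metric.sphere (0 : ℂ) 1) :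
    (fIsing d b lam 1 = 1 ↔ lam = 1) ∧
    ‖deriv (fIsing d b lam) 1‖ = (d : ℝ) * (b - 1) / (b + 1) ∧
    ((fIsing d b lam 1 = 1 ∧ ‖deriv (fIsing d b lam) 1‖ < 1) ↔
      (lam = 1 ∧ b < ((d : ℝ) + 1) / ((d : ℝ) - 1))) := by
  have hfix := fIsing_one d (b := b) (by linarith) lam
  have hnorm := norm_deriv_fIsing_one d hb (mem_sphere_zero_iff_norm.mp hlam)
  have hd' : (1 : ℝ) < d := by exact_mod_cast hd
  rw [hfix, hnorm, mul_sub_one_div_add_one_lt_one_iff hd' (by linarith)]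
  exact ⟨Iff.rfl, rfl, Iff.rfl⟩
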